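/- arXiv:0810.5431 — 2 statements merged into one kernel-verified Lean document; each statement's English description precedes it below -/
import Mathlib

section
/- Let μ_⋆ be a probability measure on a measurable space 𝒳, let W : 𝒳 → [1,∞) be measurable with ∫ W dμ_⋆ = ∞, and let h : [1,∞) → (0,∞) be decreasing with ∫_1^∞ h(s) ds < ∞. Then there exists a sequence w_n increasing to infinity such that μ_⋆({x : W(x) ≥ w_n}) ≥ 2 h(w_n) for every n. -/
/-! If the inequality `μ(W ≥ t) ≥ 2 h(t)` failed for all large `t`, the tail function
`t ↦ μ(W ≥ t)` would be dominated near infinity by the integrable function `2h`, and the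
layer-cake formula would make `W` integrable. So the inequality holds for arbitrarily large `t`,
and any such unbounded set of reals contains a strictly increasing sequence tending to infinity. -/

open MeasureTheory Filter Set

theorem exists_strictMono_tendsto_atTop_forall_of_frequently {β : Type*} [LinearOrder β]
    [NoMaxOrder β] [(atTop : Filter β).IsCountablyGenerated] {p : β → Prop}
    (h : ∃ᶠ x in atTop, p x) :
    ∃ w : ℕ → β, StrictMono w ∧ Tendsto w atTop atTop ∧ ∀ n, p (w n) := by
  obtain ⟨x, hx, hpx⟩ := exists_seq_forall_of_frequently h
  obtain ⟨φ, hφ, hxφ⟩ := strictMono_subseq_of_tendsto_atTop hx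
  exact ⟨x ∘ φ, hxφ, hx.comp hφ.tendsto_atTop, fun n => hpx (φ n)⟩

theorem integrable_of_eventually_measureReal_le_le {α : Type*} [MeasurableSpace α]
    {μ : Measure α} [IsFiniteMeasure μ] {f : α → ℝ} (hf_nonneg : 0 ≤ᵐ[μ] f)
    (hf : AEMeasurable f μ) {g : ℝ → ℝ} (hg : IntegrableAtFilter g atTop)
    (htail : ∀ᶠ t in atTop, μ.real {x | t ≤ f x} ≤ g t) : Integrable f μ := by
  obtain ⟨s, hs, hgs⟩ := hg
  obtain ⟨M, hM⟩ := eventually_atTop.1 ((htail.and hs).and (eventually_ge_atTop 0))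
  have hM_nonneg : 0 ≤ M := (hM M le_rfl).2
  refine ⟨hf.aestronglyMeasurable, ?_⟩
  rw [hasFiniteIntegral_iff_ofReal hf_nonneg, lintegral_eq_lintegral_meas_le μ hf_nonneg hf,
    ← Ioc_union_Ioi_eq_Ioi hM_nonneg, lintegral_union measurableSet_Ioi Ioc_disjoint_Ioi_same]
  refine ENNReal.add_lt_top.2 ⟨?_, ?_⟩
  · calc ∫⁻ t in Ioc 0 M, μ {x | t ≤ f x}
        ≤ ∫⁻ _ in Ioc 0 M, μ univ := lintegral_mono fun _ => measure_mono (subset_univ _)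
      _ < ⊤ := by simpa using ENNReal.mul_lt_top (measure_lt_top μ univ) ENNReal.ofReal_lt_top
  · have hIoi : Ioi M ⊆ s := fun t ht => (hM t ht.le).1.2
    calc ∫⁻ t in Ioi M, μ {x | t ≤ f x}
        ≤ ∫⁻ t in Ioi M, ENNReal.ofReal (g t) := by
          refine setLIntegral_mono' measurableSet_Ioi fun t ht => ?_
          rw [← ofReal_measureReal]
          exact ENNReal.ofReal_le_ofReal (hM t (le_of_lt ht)).1.1
      _ < ⊤ := (hgs.mono_set hIoi).lintegral_lt_top

theorem exists_tail_sequence_general {X : Type*} [MeasurableSpace X]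
    (μ : Measure X) [IsProbabilityMeasure μ]
    (W : X → ℝ) (hWmeas : Measurable W) (hW1 : ∀ x, 1 ≤ W x)
    (hWnotint : ¬ Integrable W μ)
    (h : ℝ → ℝ)
    (hint : IntegrableOn h (Set.Ici 1)) :
    ∃ w : ℕ → ℝ, Monotone w ∧ Filter.Tendsto w Filter.atTop Filter.atTop ∧
      ∀ n, 2 * h (w n) ≤ (μ {x | w n ≤ W x}).toReal := by
  have hfreq : ∃ᶠ t in atTop, 2 * h t ≤ μ.real {x | t ≤ W x} := by
    refine fun htail => hWnotint ?_
    refine integrable_of_eventually_measureReal_le_le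
      (ae_of_all _ fun x => zero_le_one.trans (hW1 x)) hWmeas.aemeasurable
      ⟨Ici 1, Ici_mem_atTop 1, hint.const_mul 2⟩ ?_
    exact htail.mono fun t ht => (not_le.1 ht).le
  obtain ⟨w, hw_mono, hw_tendsto, hw⟩ :=
    exists_strictMono_tendsto_atTop_forall_of_frequently hfreq
  exact ⟨w, hw_mono.monotone, hw_tendsto, hw⟩

/-- if `W ≥ 1` has infinite integral with respect to a probability
measure `μ` and `h` is a positive decreasing integrable function on `[1,∞)`,
then there is a sequence `w n` increasing to infinity along which
`μ(W ≥ w n) ≥ 2 h(w n)`. -/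
theorem exists_tail_sequence {X : Type*} [MeasurableSpace X]
    (μ : Measure X) [IsProbabilityMeasure μ]
    (W : X → ℝ) (hWmeas : Measurable W) (hW1 : ∀ x, 1 ≤ W x)
    (hWnotint : ¬ Integrable W μ)
    (h : ℝ → ℝ) (hpos : ∀ s, 1 ≤ s → 0 < h s)
    (hdec : ∀ s t, 1 ≤ s → s ≤ t → h t ≤ h s)
    (hint : IntegrableOn h (Set.Ici 1)) :
    ∃ w : ℕ → ℝ, Monotone w ∧ Filter.Tendsto w Filter.atTop Filter.atTop ∧
      ∀ n, 2 * h (w n) ≤ (μ {x | w n ≤ W x}).toReal :=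
  exists_tail_sequence_general μ W hWmeas hW1 hWnotint h hint
end

section
/- Let A be the 3×3 real matrix A = [[0, 1/2, −1/2], [−2α, −γ, 0], [2α, 0, 0]] with α, γ > 0. Then det A = −γα, and every eigenvalue of A has strictly negative real part. -/
/-!
The characteristic polynomial of `A` is `t³ + γt² + 2αt + γα`, and the Routh–Hurwitz criterion
for cubics applies since `γ · 2α > γα`. For that criterion, let `z = x + iy` be a root of
`z³ + az² + bz + c` with `x ≥ 0`. The imaginary part of the equation forces either `y = 0`,
impossible since all coefficients are positive, or `y² = 3x² + 2ax + b`; substituted into the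
real part this leaves `8x³ + 8ax² + 2(a² + b)x + (ab - c) = 0`, whose left side is positive.
-/

open Matrix

theorem Complex.re_neg_of_cubic_eq_zero {a b c : ℝ} (ha : 0 < a) (hc : 0 < c) (habc : c < a * b)
    {z : ℂ} (hz : z ^ 3 + a * z ^ 2 + b * z + c = 0) : z.re < 0 := by
  set x := z.re
  set y := z.im
  have hre : x ^ 3 - 3 * x * y ^ 2 + a * (x ^ 2 - y ^ 2) + b * x + c = 0 := by
    have h := congrArg Complex.re hz
    simp only [pow_succ, pow_zero, one_mul, Complex.add_re, Complex.mul_re, Complex.mul_im,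
      Complex.ofReal_re, Complex.ofReal_im, Complex.zero_re] at h
    linear_combination h
  have him : y * (3 * x ^ 2 - y ^ 2 + 2 * a * x + b) = 0 := by
    have h := congrArg Complex.im hz
    simp only [pow_succ, pow_zero, one_mul, Complex.add_im, Complex.mul_re, Complex.mul_im,
      Complex.ofReal_re, Complex.ofReal_im, Complex.zero_im] at h
    linear_combination h
  have hb : 0 < b := pos_of_mul_pos_right (hc.trans habc) ha.le
  by_contra! hx
  rcases mul_eq_zero.mp him with hy | hy
  · rw [hy] at hre
    nlinarith [pow_nonneg hx 3, mul_nonneg ha.le (pow_nonneg hx 2), mul_nonneg hb.le hx]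
  · have hy2 : y ^ 2 = 3 * x ^ 2 + 2 * a * x + b := by linear_combination -hy
    have hx_eq : 8 * x ^ 3 + 8 * a * x ^ 2 + 2 * (a ^ 2 + b) * x + (a * b - c) = 0 := by
      linear_combination -hre - (3 * x + a) * hy2
    nlinarith [pow_nonneg hx 3, mul_nonneg ha.le (pow_nonneg hx 2),
      mul_nonneg (add_nonneg (sq_nonneg a) hb.le) hx]

noncomputable def matrixA (α γ : ℝ) : Matrix (Fin 3) (Fin 3) ℝ :=
  !![0, 1/2, -1/2; -2*α, -γ, 0; 2*α, 0, 0]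

theorem det_matrixA (α γ : ℝ) : (matrixA α γ).det = -γ * α := by
  simp only [matrixA, det_fin_three, of_apply, cons_val', cons_val, Fin.isValue]
  ring

theorem eval_charpoly_map_matrixA (α γ : ℝ) (t : ℂ) :
    ((matrixA α γ).map Complex.ofReal).charpoly.eval t =
      t ^ 3 + γ * t ^ 2 + (2 * α : ℝ) * t + (γ * α : ℝ) := by
  simp only [eval_charpoly, det_fin_three, matrixA, Matrix.sub_apply, scalar_apply, diagonal_apply,
    map_apply, of_apply, cons_val', cons_val, Fin.isValue, Fin.reduceEq, if_true, if_false]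
  push_cast
  ring

/-- the matrix `A = [[0, 1/2, -1/2], [-2α, -γ, 0], [2α, 0, 0]]`
with `α, γ > 0` has determinant `-γα` and all its (complex) eigenvalues have
strictly negative real part. -/
theorem matrix_A_hurwitz (α γ : ℝ) (hα : 0 < α) (hγ : 0 < γ) :
    (Matrix.det !![(0:ℝ), 1/2, -1/2; -2*α, -γ, 0; 2*α, 0, 0] = -γ * α) ∧
    ∀ lam : ℂ,
      lam ∈ spectrum ℂ
        ((!![(0:ℝ), 1/2, -1/2; -2*α, -γ, 0; 2*α, 0, 0]).map (Complex.ofReal)) →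
      lam.re < 0 := by
  refine ⟨det_matrixA α γ, fun lam hlam => ?_⟩
  have hroot : lam ^ 3 + γ * lam ^ 2 + (2 * α : ℝ) * lam + (γ * α : ℝ) = 0 :=
    (eval_charpoly_map_matrixA α γ lam).symm.trans (mem_spectrum_iff_isRoot_charpoly.mp hlam)
  have hγα : 0 < γ * α := mul_pos hγ hα
  exact Complex.re_neg_of_cubic_eq_zero hγ hγα (by linarith) hroot
end
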